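/- arXiv:1701.02859 — 5 statements merged into one kernel-verified Lean document; each statement's English description precedes it below -/
import Mathlib

section
/- For any finite simple connected graph G, the total ve-degree (sum over all vertices of their ve-degrees) equals M₁(G) − 3t(G), where M₁(G) = Σ_{v∈V} deg(v)² is the first Zagreb index and t(G) is the number of triangles in G. -/
open scoped Classical
open Finset SimpleGraph

/-- ve-degree of a vertex: number of edges incident to at least one vertex of N[v]. -/
noncomputable def veDeg {V : Type*} [Fintype V] (G : SimpleGraph V) (v : V) : ℕ :=
  (G.edgeFinset.filter (fun e => ∃ u ∈ insert v (G.neighborFinset v), u ∈ e)).card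

/-- ev-degree of an edge s(u,v): |N[u] ∪ N[v]|. -/
noncomputable def evDeg {V : Type*} [Fintype V] (G : SimpleGraph V) : Sym2 V → ℕ :=
  Sym2.lift ⟨fun u v =>
      ((insert u (G.neighborFinset u)) ∪ (insert v (G.neighborFinset v))).card,
    fun u v => congrArg Finset.card (Finset.union_comm _ _)⟩

/-- ev-degree Zagreb index S(G). -/
noncomputable def evZagreb {V : Type*} [Fintype V] (G : SimpleGraph V) : ℕ :=
  ∑ e ∈ G.edgeFinset, (evDeg G e) ^ 2

/-- first ve-degree Zagreb alpha index S^α(G). -/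
noncomputable def veAlpha {V : Type*} [Fintype V] (G : SimpleGraph V) : ℕ :=
  ∑ v, (veDeg G v) ^ 2

/-- first ve-degree Zagreb beta index S^β(G). -/
noncomputable def veBeta {V : Type*} [Fintype V] (G : SimpleGraph V) : ℕ :=
  ∑ e ∈ G.edgeFinset,
    Sym2.lift ⟨fun u v => veDeg G u + veDeg G v, fun u v => Nat.add_comm _ _⟩ e

/-- second ve-degree Zagreb index S^μ(G). -/
noncomputable def veMu {V : Type*} [Fintype V] (G : SimpleGraph V) : ℕ :=
  ∑ e ∈ G.edgeFinset,
    Sym2.lift ⟨fun u v => veDeg G u * veDeg G v, fun u v => Nat.mul_comm _ _⟩ e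

/-- second Zagreb index M₂(G). -/
noncomputable def zagreb2 {V : Type*} [Fintype V] (G : SimpleGraph V) : ℕ :=
  ∑ e ∈ G.edgeFinset,
    Sym2.lift ⟨fun u v => G.degree u * G.degree v, fun u v => Nat.mul_comm _ _⟩ e

/-- forgotten topological index F(G). -/
noncomputable def forgotten {V : Type*} [Fintype V] (G : SimpleGraph V) : ℕ :=
  ∑ e ∈ G.edgeFinset,
    Sym2.lift ⟨fun u v => G.degree u ^ 2 + G.degree v ^ 2, fun u v => Nat.add_comm _ _⟩ e

/-- the star graph K_{1,n-1} on `Fin n`, with center 0. -/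
def starGraph (n : ℕ) : SimpleGraph (Fin n) where
  Adj a b := a ≠ b ∧ (a.val = 0 ∨ b.val = 0)
  symm := ⟨fun a b h => ⟨h.1.symm, h.2.symm⟩⟩
  loopless := ⟨fun a h => h.1 rfl⟩

/-!
An edge meeting `N[v]` already meets `N(v)`. Summing degrees over `N(v)` counts every such edge
once per endpoint in `N(v)`, so the edges inside `N(v)` are counted twice; these are in bijection
with the triangles through `v`, whence `ve(v) + t(v) = ∑_{u ∼ v} deg u`. Summed over `v`, the
right side becomes `∑ deg(u)²` and every triangle is counted once at each of its three vertices.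
-/

lemma Sym2.card_filter_mem_of_not_isDiag {V : Type*} [Fintype V] [DecidableEq V] (s : Finset V)
    {e : Sym2 V} (he : ¬e.IsDiag) :
    #{u ∈ s | u ∈ e} =
      (if ∃ u ∈ s, u ∈ e then 1 else 0) + (if ∀ u ∈ e, u ∈ s then 1 else 0) := by
  induction e using Sym2.ind with
  | _ a b =>
    have hab : a ≠ b := by simpa using he
    have hex : (∃ u ∈ s, u = a ∨ u = b) ↔ a ∈ s ∨ b ∈ s := by
      simp only [and_or_left, exists_or, exists_eq_right]
    simp only [Sym2.mem_iff, hex]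
    by_cases ha : a ∈ s <;> by_cases hb : b ∈ s <;>
      simp [ha, hb, filter_or, filter_eq', hab]

namespace SimpleGraph

variable {V : Type*} [Fintype V] (G : SimpleGraph V)

lemma sum_sum_neighborFinset [DecidableRel G.Adj] {M : Type*} [AddCommMonoid M] (f : V → M) :
    ∑ v, ∑ u ∈ G.neighborFinset v, f u = ∑ u, G.degree u • f u := by
  rw [Finset.sum_comm' (t' := univ) (s' := fun u => G.neighborFinset u) (by simp [adj_comm])]
  simp

lemma sum_degree_eq_card_edges_meeting_add_card_edges_within [DecidableEq V]
    [DecidableRel G.Adj] (s : Finset V) :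
    ∑ u ∈ s, G.degree u =
      #{e ∈ G.edgeFinset | ∃ u ∈ s, u ∈ e} + #{e ∈ G.edgeFinset | ∀ u ∈ e, u ∈ s} := by
  have hdeg (u : V) : G.degree u = #{e ∈ G.edgeFinset | u ∈ e} := by
    rw [← card_incidenceFinset_eq_degree, incidenceFinset_eq_filter]
  simp_rw [hdeg, card_filter]
  rw [sum_comm, ← sum_add_distrib]
  refine sum_congr rfl fun e he => ?_
  rw [← card_filter]
  exact Sym2.card_filter_mem_of_not_isDiag s
    (G.not_isDiag_of_mem_edgeSet (mem_edgeFinset.mp he))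

lemma veDeg_eq_card_edges_meeting_neighborFinset (v : V) :
    veDeg G v = #{e ∈ G.edgeFinset | ∃ u ∈ G.neighborFinset v, u ∈ e} := by
  refine congrArg card (filter_congr fun e he => ?_)
  rw [exists_mem_insert, or_iff_right_iff_imp]
  induction e using Sym2.ind with
  | _ a b =>
    have hab : G.Adj a b := mem_edgeFinset.mp he
    rw [Sym2.mem_iff]
    rintro (rfl | rfl)
    · exact ⟨b, by simpa using hab, by simp⟩
    · exact ⟨a, by simpa using hab.symm, by simp⟩

lemma card_edges_within_neighborFinset [DecidableEq V] [DecidableRel G.Adj] (v : V) :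
    #{e ∈ G.edgeFinset | ∀ u ∈ e, u ∈ G.neighborFinset v} =
      #{T ∈ G.cliqueFinset 3 | v ∈ T} := by
  refine card_nbij (fun e => insert v e.toFinset) ?_ ?_ ?_
  · intro e he
    simp only [mem_coe, mem_filter, mem_edgeFinset, mem_neighborFinset] at he
    obtain ⟨he, hv⟩ := he
    induction e using Sym2.ind with
    | _ a b =>
      simp only [Sym2.toFinset_mk_eq, mem_coe, mem_filter, mem_cliqueFinset_iff,
        mem_insert_self, and_true]
      exact is3Clique_triple_iff.mpr ⟨hv a (by simp), hv b (by simp), he⟩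
  · intro e he e' he' (h : insert v e.toFinset = insert v e'.toFinset)
    simp only [mem_coe, mem_filter, mem_neighborFinset] at he he'
    have hv {e : Sym2 V} (he : ∀ u ∈ e, G.Adj v u) : v ∉ e.toFinset :=
      fun hve => (he v (Sym2.mem_toFinset.mp hve)).ne rfl
    have key : e.toFinset = e'.toFinset := by
      rw [← erase_insert (hv he.2), h, erase_insert (hv he'.2)]
    exact Sym2.ext fun x => by rw [← Sym2.mem_toFinset, key, Sym2.mem_toFinset]
  · intro T hT
    simp only [mem_coe, mem_filter, mem_cliqueFinset_iff] at hT
    obtain ⟨hT, hvT⟩ := hT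
    obtain ⟨a, b, hab, hTv⟩ : ∃ a b, a ≠ b ∧ T.erase v = {a, b} :=
      card_eq_two.mp (by rw [card_erase_of_mem hvT, hT.card_eq])
    have ha : a ∈ T.erase v := by simp [hTv]
    have hb : b ∈ T.erase v := by simp [hTv]
    refine ⟨s(a, b), ?_, ?_⟩
    · simp only [mem_coe, mem_filter, mem_edgeFinset, mem_neighborFinset, Sym2.mem_iff]
      refine ⟨hT.isClique (mem_of_mem_erase ha) (mem_of_mem_erase hb) hab, ?_⟩
      rintro u (rfl | rfl)
      · exact hT.isClique hvT (mem_of_mem_erase ha) (ne_of_mem_erase ha).symm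
      · exact hT.isClique hvT (mem_of_mem_erase hb) (ne_of_mem_erase hb).symm
    · change insert v s(a, b).toFinset = T
      rw [Sym2.toFinset_mk_eq, ← hTv, insert_erase hvT]

lemma sum_card_cliqueFinset_mem [DecidableEq V] [DecidableRel G.Adj] (n : ℕ) :
    ∑ v, #{T ∈ G.cliqueFinset n | v ∈ T} = n * #(G.cliqueFinset n) :=
  calc ∑ v, #{T ∈ G.cliqueFinset n | v ∈ T} = ∑ T ∈ G.cliqueFinset n, #T := by
        simpa [bipartiteAbove, bipartiteBelow] using
          sum_card_bipartiteAbove_eq_sum_card_bipartiteBelow (s := univ) (t := G.cliqueFinset n)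
            (r := fun v T => v ∈ T)
    _ = n * #(G.cliqueFinset n) := by
        rw [sum_const_nat fun T hT => (mem_cliqueFinset_iff.mp hT).card_eq, mul_comm]

lemma veDeg_add_card_cliqueFinset_three_mem_eq_sum_degree (v : V) :
    veDeg G v + #{T ∈ G.cliqueFinset 3 | v ∈ T} = ∑ u ∈ G.neighborFinset v, G.degree u := by
  rw [veDeg_eq_card_edges_meeting_neighborFinset, ← card_edges_within_neighborFinset,
    sum_degree_eq_card_edges_meeting_add_card_edges_within]

lemma sum_veDeg_add_three_mul_card_cliqueFinset_three_eq_sum_degree_sq :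
    ∑ v, veDeg G v + 3 * #(G.cliqueFinset 3) = ∑ v, G.degree v ^ 2 := by
  rw [← sum_card_cliqueFinset_mem, ← sum_add_distrib]
  simp only [veDeg_add_card_cliqueFinset_three_mem_eq_sum_degree, sum_sum_neighborFinset,
    smul_eq_mul, sq]

end SimpleGraph

theorem total_ve_eq_zagreb1_sub_triangles_general {V : Type*} [Fintype V] (G : SimpleGraph V) :
    (∑ v, veDeg G v : ℤ) =
      ∑ v, (G.degree v : ℤ) ^ 2 - 3 * ((G.cliqueFinset 3).card : ℤ) := by
  rw [eq_sub_iff_add_eq]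
  exact_mod_cast G.sum_veDeg_add_three_mul_card_cliqueFinset_three_eq_sum_degree_sq

theorem total_ve_eq_zagreb1_sub_triangles {V : Type*} [Fintype V] (G : SimpleGraph V)
    (hG : G.Connected) :
    (∑ v, veDeg G v : ℤ) =
      ∑ v, (G.degree v : ℤ) ^ 2 - 3 * ((G.cliqueFinset 3).card : ℤ) :=
  total_ve_eq_zagreb1_sub_triangles_general G
end

section
/- Let T be a tree and v a vertex of T. Then the ve-degree of v equals the sum of the degrees of the neighbors of v: c_v = Σ_{u ∈ N(v)} deg(u). -/
open scoped Classical
open Finset SimpleGraph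

/-!
Since every edge at `v` also meets a neighbour of `v`, the edges meeting `N[v]` are exactly the
edges at the neighbours of `v`. A tree has no triangle, so no edge joins two neighbours of `v`:
their sets of incident edges are pairwise disjoint, and counting them gives the sum of the degrees.
-/

namespace SimpleGraph

variable {V : Type*} [Fintype V] (G : SimpleGraph V)

lemma veDeg_eq_card_biUnion_incidenceFinset (v : V) :
    veDeg G v = #((G.neighborFinset v).biUnion fun u => G.incidenceFinset u) := by
  rw [veDeg]
  congr 1
  ext e
  induction e using Sym2.ind with
  | _ a b =>
    simp only [mem_filter, mem_biUnion, mem_insert, mem_neighborFinset, mem_incidenceFinset,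
      incidenceSet, Set.mem_sep_iff, mem_edgeFinset, mem_edgeSet, Sym2.mem_iff]
    constructor
    · rintro ⟨hab, u, rfl | hu, hua | hub⟩
      · exact ⟨b, hua ▸ hab, hab, Or.inr rfl⟩
      · exact ⟨a, hub ▸ hab.symm, hab, Or.inl rfl⟩
      · exact ⟨u, hu, hab, Or.inl hua⟩
      · exact ⟨u, hu, hab, Or.inr hub⟩
    · rintro ⟨u, hu, hab, hm⟩
      exact ⟨hab, u, Or.inr hu, hm⟩

lemma card_biUnion_incidenceFinset_of_isIndepSet {s : Finset V} (hs : G.IsIndepSet ↑s) :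
    #(s.biUnion fun u => G.incidenceFinset u) = ∑ u ∈ s, G.degree u := by
  rw [card_biUnion]
  · exact sum_congr rfl fun u _ => G.card_incidenceFinset_eq_degree u
  · intro u hu w hw huw
    rw [Function.onFun, ← disjoint_coe, coe_incidenceFinset, coe_incidenceFinset,
      Set.disjoint_iff_inter_eq_empty]
    exact G.incidenceSet_inter_incidenceSet_of_not_adj (hs hu hw huw) huw

lemma veDeg_eq_sum_degree_of_cliqueFree_three (hG : G.CliqueFree 3) (v : V) :
    veDeg G v = ∑ u ∈ G.neighborFinset v, G.degree u := by
  rw [veDeg_eq_card_biUnion_incidenceFinset, card_biUnion_incidenceFinset_of_isIndepSet]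
  simpa only [coe_neighborFinset] using isIndepSet_neighborSet_of_triangleFree G hG v

end SimpleGraph

theorem veDeg_eq_sum_degrees_of_tree {V : Type*} [Fintype V] (G : SimpleGraph V)
    (hT : G.IsTree) (v : V) :
    veDeg G v = ∑ u ∈ G.neighborFinset v, G.degree u :=
  G.veDeg_eq_sum_degree_of_cliqueFree_three (hT.isAcyclic.cliqueFree le_rfl) v
end

section
/- For the path graph Pₙ with n ≥ 3 vertices, the ev-degree Zagreb index equals 16n − 30. -/
/-! For adjacent vertices `u`, `v` of a triangle-free graph, `N[u] ∪ N[v]` is the disjoint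
union of `N(u)` and `N(v)`, so `c_uv = d_u + d_v`. In `Pₙ` the two end edges therefore have
`c_e = 1 + 2` and the other `n - 3` edges `c_e = 2 + 2`, whence `S(Pₙ) = 2 · 9 + 16 (n - 3)`. -/

open scoped Classical
open Finset SimpleGraph

namespace SimpleGraph

variable {V : Type*} [Fintype V] {G : SimpleGraph V}

lemma evDeg_eq_degree_add_degree (hG : G.CliqueFree 3) {u v : V} (huv : G.Adj u v) :
    evDeg G s(u, v) = G.degree u + G.degree v := by
  have hclosed : insert u (G.neighborFinset u) ∪ insert v (G.neighborFinset v) =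
      G.neighborFinset u ∪ G.neighborFinset v := by
    ext w
    simp only [mem_union, mem_insert, mem_neighborFinset]
    constructor
    · rintro ((rfl | h) | (rfl | h))
      exacts [Or.inr huv.symm, Or.inl h, Or.inl huv, Or.inr h]
    · tauto
  have hdisj : Disjoint (G.neighborFinset u) (G.neighborFinset v) := by
    refine Finset.disjoint_left.mpr fun w hwu hwv => hG {u, v, w} ?_
    rw [is3Clique_triple_iff]
    exact ⟨huv, (mem_neighborFinset _ _ _).mp hwu, (mem_neighborFinset _ _ _).mp hwv⟩
  simp only [evDeg, Sym2.lift_mk]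
  rw [hclosed, card_union_of_disjoint hdisj, card_neighborFinset_eq_degree,
    card_neighborFinset_eq_degree]

lemma pathGraph_cliqueFree_three (n : ℕ) : (pathGraph n).CliqueFree 3 :=
  (pathGraph.bicoloring n).colorable.cliqueFree (by simp)

lemma pathGraph_edgeFinset (m : ℕ) :
    (pathGraph (m + 1)).edgeFinset = univ.image fun i : Fin m => s(i.castSucc, i.succ) := by
  ext e
  refine Sym2.ind (fun u v => ?_) e
  simp only [mem_edgeFinset, mem_edgeSet, pathGraph_adj, mem_image, mem_univ, true_and,
    Sym2.eq_iff, Fin.ext_iff, Fin.val_castSucc, Fin.val_succ]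
  constructor
  · rintro (h | h)
    · exact ⟨⟨u, by omega⟩, Or.inl ⟨rfl, h⟩⟩
    · exact ⟨⟨v, by omega⟩, Or.inr ⟨rfl, h⟩⟩
  · rintro ⟨i, ⟨h1, h2⟩ | ⟨h1, h2⟩⟩ <;> omega

lemma pathGraph_degree {n : ℕ} (hn : 2 ≤ n) (i : Fin n) :
    (pathGraph n).degree i = if i.val = 0 ∨ i.val + 1 = n then 1 else 2 := by
  rw [← card_neighborFinset_eq_degree]
  split_ifs with hend
  · rw [card_eq_one]
    refine ⟨⟨if i.val = 0 then 1 else i.val - 1, by split_ifs <;> omega⟩, ?_⟩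
    ext x
    simp only [mem_neighborFinset, pathGraph_adj, mem_singleton, Fin.ext_iff]
    split_ifs <;> omega
  · rw [card_eq_two]
    refine ⟨⟨i - 1, by omega⟩, ⟨i + 1, by omega⟩, by simp [Fin.ext_iff], ?_⟩
    ext x
    simp only [mem_neighborFinset, pathGraph_adj, mem_insert, mem_singleton, Fin.ext_iff]
    omega

lemma evZagreb_pathGraph_eq_sum (m : ℕ) :
    evZagreb (pathGraph (m + 1)) =
      ∑ i : Fin m,
        ((pathGraph (m + 1)).degree i.castSucc + (pathGraph (m + 1)).degree i.succ) ^ 2 := by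
  have hinj : Set.InjOn (fun i : Fin m => s(i.castSucc, i.succ)) (univ : Finset (Fin m)) := by
    intro i _ j _ h
    simp only [Sym2.eq_iff, Fin.ext_iff, Fin.val_castSucc, Fin.val_succ] at h
    exact Fin.ext (by omega)
  rw [evZagreb, pathGraph_edgeFinset, sum_image hinj]
  refine sum_congr rfl fun i _ => ?_
  rw [evDeg_eq_degree_add_degree (pathGraph_cliqueFree_three _) (pathGraph_adj.mpr (.inl rfl))]

end SimpleGraph

theorem evZagreb_pathGraph (n : ℕ) (hn : 3 ≤ n) :
    evZagreb (SimpleGraph.pathGraph n) = 16 * n - 30 := by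
  obtain ⟨k, rfl⟩ : ∃ k, n = k + 3 := ⟨n - 3, by omega⟩
  rw [evZagreb_pathGraph_eq_sum, Fin.sum_univ_succ, Fin.sum_univ_castSucc]
  simp (disch := omega) only [pathGraph_degree]
  simp only [Fin.val_castSucc, Fin.val_succ, Fin.val_zero, Fin.val_last]
  rw [sum_congr rfl fun j _ => show _ = 16 by rw [if_neg (by omega), if_neg (by omega)]; rfl]
  simp only [sum_const, card_univ, Fintype.card_fin, smul_eq_mul]
  norm_num
  omega
end

section
/- Let T be a tree on n ≥ 3 vertices. Then 16n − 30 ≤ S(T) ≤ n²(n − 1), where S(T) is the ev-degree Zagreb index; the lower bound is attained if and only if T is a path and the upper bound if and only if T is a star. -/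
open scoped Classical
open Finset SimpleGraph

/-! Adjacent vertices of a tree have no common neighbour, so the ev-degree of an edge `uv` is
`d(u) + d(v)` and `∑ₑ cₑ = ∑ᵥ d(v)²`. Since no integer lies strictly between `k` and `k + 1`,
`(2k + 1) x ≤ x² + k(k + 1)`, with equality iff `x ∈ {k, k + 1}`. Taking `k = 1` for the degrees
and `k = 3` for the ev-degrees, and using `∑ᵥ d(v) = 2(n - 1)`, gives
`S ≥ 7 ∑ᵥ d(v)² - 12(n - 1) ≥ 16n - 30`, with equality iff every degree is at most 2 (an edge of
ev-degree 2 would be a whole component), i.e. iff the tree is a path.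
For the upper bound `cₑ ≤ n`; equality on the edge at a leaf makes the leaf's neighbour adjacent to
every vertex, and a triangle-free graph with a universal vertex is a star. -/

theorem Nat.two_mul_add_one_mul_le_sq_add (k c : ℕ) : (2 * k + 1) * c ≤ c ^ 2 + k * (k + 1) := by
  rcases le_or_gt c k with h | h <;> nlinarith

theorem Nat.two_mul_add_one_mul_eq_sq_add_iff (k c : ℕ) :
    (2 * k + 1) * c = c ^ 2 + k * (k + 1) ↔ c = k ∨ c = k + 1 := by
  refine ⟨fun h => ?_, by rintro (rfl | rfl) <;> ring⟩
  by_contra! hc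
  rcases lt_or_gt_of_ne hc.1 with h1 | h1
  · nlinarith
  · have : k + 1 < c := by omega
    nlinarith

namespace Finset

variable {ι : Type*}

theorem two_mul_add_one_mul_sum_le (s : Finset ι) (f : ι → ℕ) (k : ℕ) :
    (2 * k + 1) * ∑ i ∈ s, f i ≤ ∑ i ∈ s, f i ^ 2 + #s * (k * (k + 1)) := by
  rw [mul_sum, ← smul_eq_mul #s, ← sum_const, ← sum_add_distrib]
  exact sum_le_sum fun i _ => Nat.two_mul_add_one_mul_le_sq_add k (f i)

theorem two_mul_add_one_mul_sum_eq_iff (s : Finset ι) (f : ι → ℕ) (k : ℕ) :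
    (2 * k + 1) * ∑ i ∈ s, f i = ∑ i ∈ s, f i ^ 2 + #s * (k * (k + 1)) ↔
      ∀ i ∈ s, f i = k ∨ f i = k + 1 := by
  rw [mul_sum, ← smul_eq_mul #s, ← sum_const, ← sum_add_distrib,
    sum_eq_sum_iff_of_le fun i _ => Nat.two_mul_add_one_mul_le_sq_add k (f i)]
  simp only [Nat.two_mul_add_one_mul_eq_sq_add_iff]

end Finset

namespace SimpleGraph

variable {V : Type*} {G : SimpleGraph V}

theorem Preconnected.eq_univ_of_adj_mem (hG : G.Preconnected) {s : Set V} {u : V} (hu : u ∈ s)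
    (hs : ∀ ⦃x y⦄, G.Adj x y → x ∈ s → y ∈ s) : s = Set.univ := by
  refine Set.eq_univ_of_forall fun w => ?_
  by_contra hw
  obtain ⟨d, -, hd, hd'⟩ := (hG u w).some.exists_boundary_dart s hu hw
  exact hd' (hs d.adj hd)

theorem Preconnected.card_le_two_of_adj_of_degree_eq_one [Fintype V] (hG : G.Preconnected)
    {u v : V} (h : G.Adj u v) (hu : G.degree u = 1) (hv : G.degree v = 1) :
    Fintype.card V ≤ 2 := by
  have hclosed : ∀ ⦃x y⦄, G.Adj x y → x ∈ ({u, v} : Set V) → y ∈ ({u, v} : Set V) := by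
    rintro x y hxy (rfl | rfl)
    · exact .inr ((degree_eq_one_iff_existsUnique_adj.mp hu).unique hxy h)
    · exact .inl ((degree_eq_one_iff_existsUnique_adj.mp hv).unique hxy h.symm)
  have huniv := hG.eq_univ_of_adj_mem (Set.mem_insert u {v}) hclosed
  have hsub : (univ : Finset V) ⊆ {u, v} := fun x _ => by
    have hx : x ∈ ({u, v} : Set V) := huniv ▸ Set.mem_univ x
    simpa using hx
  exact (card_le_card hsub).trans card_le_two

/-- If `G.Adj (f a) (f b)`, the image of a path from `a` to `b` is a path, hence by acyclicity
the edge itself. -/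
theorem nonempty_iso_of_bijective_of_isAcyclic {W : Type*} {H : SimpleGraph W} (f : H →g G)
    (hf : Function.Bijective f) (hH : H.Preconnected) (hG : G.IsAcyclic) : Nonempty (H ≃g G) := by
  refine ⟨{ Equiv.ofBijective f hf with map_rel_iff' := fun {a b} => ⟨fun h => ?_, f.map_adj⟩ }⟩
  obtain ⟨q, hq⟩ := hH.exists_isPath a b
  have hmap := (hG.subsingleton_path _ _).elim ⟨q.map f, hq.map hf.injective⟩ (Path.singleton h)
  have hlen : (q.map f).length = 1 := congrArg (fun p : G.Path _ _ => p.1.length) hmap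
  exact Walk.adj_of_length_eq_one (by simpa using hlen)

theorem pathGraph_degree_le_two {n : ℕ} (v : Fin n) : (pathGraph n).degree v ≤ 2 := by
  rcases n with _ | _ | n
  · exact v.elim0
  · simp [Subsingleton.elim (pathGraph 1) ⊥]
  · grw [degree_le_of_le pathGraph_le_cycleGraph, cycleGraph_degree_two_le]
    exact card_le_two

/-- A longest path is Hamiltonian: its ends cannot be extended, and an interior vertex already
spends its two edges on the path. -/
theorem Preconnected.exists_isHamiltonian_of_degree_le_two [Fintype V] [Nonempty V]
    [DecidableEq V] (hG : G.Preconnected) (hdeg : ∀ v, G.degree v ≤ 2) :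
    ∃ (u v : V) (p : G.Walk u v), p.IsHamiltonian := by
  obtain ⟨u, v, p, hp, hmax⟩ := Walk.exists_isPath_forall_isPath_length_le_length G
  refine ⟨u, v, p, hp.isHamiltonian_of_mem fun w => ?_⟩
  suffices hclosed : ∀ ⦃x y⦄, G.Adj x y → x ∈ p.support → y ∈ p.support by
    have := hG.eq_univ_of_adj_mem (s := {x | x ∈ p.support}) p.start_mem_support hclosed
    exact Set.eq_univ_iff_forall.mp this w
  intro x y hxy hx
  by_contra hy
  obtain ⟨i, rfl, hi⟩ := Walk.mem_support_iff_exists_getVert.mp hx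
  rcases Nat.eq_zero_or_pos i with rfl | hi0
  · rw [Walk.getVert_zero] at hxy
    have := hmax _ _ (p.cons hxy.symm) (hp.cons hy)
    simp at this
  rcases hi.lt_or_eq with hil | rfl
  · have hprev := p.adj_getVert_succ (i := i - 1) (by omega)
    have hnext := p.adj_getVert_succ hil
    rw [Nat.sub_add_cancel hi0] at hprev
    have hne : p.getVert (i - 1) ≠ p.getVert (i + 1) := fun h => by
      have := hp.getVert_injOn (by simp; omega) (by simp; omega) h
      omega
    have hnbr : G.neighborFinset (p.getVert i) = {p.getVert (i - 1), p.getVert (i + 1)} :=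
      (eq_of_subset_of_card_le (by simp [insert_subset_iff, hprev.symm, hnext])
        (by rw [card_pair hne, card_neighborFinset_eq_degree]; exact hdeg _)).symm
    have hy' : y ∈ G.neighborFinset (p.getVert i) := by simpa using hxy
    rw [hnbr, mem_insert, mem_singleton] at hy'
    rcases hy' with rfl | rfl <;> exact hy (p.getVert_mem_support _)
  · rw [Walk.getVert_length] at hxy
    have := hmax _ _ (p.concat hxy) (hp.concat hy hxy)
    simp at this

theorem IsTree.nonempty_iso_pathGraph_iff [Fintype V] (hT : G.IsTree) :
    Nonempty (G ≃g pathGraph (Fintype.card V)) ↔ ∀ v, G.degree v ≤ 2 := by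
  refine ⟨fun ⟨e⟩ v => e.degree_eq v ▸ pathGraph_degree_le_two (e v), fun hdeg => ?_⟩
  have := hT.connected.nonempty
  obtain ⟨u, v, p, hp⟩ := hT.connected.preconnected.exists_isHamiltonian_of_degree_le_two hdeg
  let f : pathGraph p.support.length →g G :=
    ⟨hp.getVertEquiv, fun {i j} hij => by
      have hlen := p.length_support
      rcases pathGraph_adj.mp hij with h | h
      · simpa [← h] using p.adj_getVert_succ (i := i) (by omega)
      · simpa [← h] using (p.adj_getVert_succ (i := j) (by omega)).symm⟩
  obtain ⟨e⟩ := nonempty_iso_of_bijective_of_isAcyclic f hp.getVertEquiv.bijective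
    (pathGraph_preconnected _) hT.isAcyclic
  rw [← hp.length_support]
  exact ⟨e.symm⟩

theorem CliqueFree.not_adj_of_adj_of_adj (hG : G.CliqueFree 3) {u v w : V} (huv : G.Adj u v)
    (huw : G.Adj u w) : ¬G.Adj v w := fun hvw =>
  hG {u, v, w} (is3Clique_triple_iff.mpr ⟨huv, huw, hvw⟩)

theorem CliqueFree.eq_starGraph_of_isUniversal (hG : G.CliqueFree 3) {c : V}
    (hc : G.IsUniversal c) : G = starGraph c := by
  ext u v
  rw [starGraph_adj]
  refine ⟨fun h => ⟨h.ne, ?_⟩, ?_⟩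
  · by_contra! hne
    exact hG.not_adj_of_adj_of_adj (hc (Ne.symm hne.1)) (hc (Ne.symm hne.2)) h
  · rintro ⟨hne, rfl | rfl⟩
    exacts [hc hne, (hc hne.symm).symm]

theorem nonempty_iso_starGraph {W : Type*} (g : V ≃ W) (c : V) :
    Nonempty (starGraph c ≃g starGraph (g c)) :=
  ⟨⟨g, by simp [starGraph_adj]⟩⟩

theorem starGraph_fin_eq {n : ℕ} (hn : 0 < n) : _root_.starGraph n = starGraph ⟨0, hn⟩ := by
  ext u v
  simp [_root_.starGraph, starGraph_adj, Fin.ext_iff]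

theorem CliqueFree.nonempty_iso_starGraph_iff [Fintype V] [Nonempty V] (hG : G.CliqueFree 3) :
    Nonempty (G ≃g _root_.starGraph (Fintype.card V)) ↔ ∃ c, G.IsUniversal c := by
  rw [starGraph_fin_eq Fintype.card_pos]
  constructor
  · rintro ⟨e⟩
    refine ⟨e.symm ⟨0, Fintype.card_pos⟩, fun w hw => e.map_adj_iff.mp ?_⟩
    rw [e.apply_symm_apply]
    exact isUniversal_starGraph_self fun h => hw (e.symm_apply_eq.mpr h)
  · rintro ⟨c, hc⟩
    let g := (Fintype.equivFin V).trans (Equiv.swap (Fintype.equivFin V c) ⟨0, Fintype.card_pos⟩)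
    have hgc : g c = ⟨0, Fintype.card_pos⟩ := by simp [g]
    rw [hG.eq_starGraph_of_isUniversal hc, ← hgc]
    exact nonempty_iso_starGraph g c

theorem sum_edgeFinset_sum_toFinset [Fintype V] {M : Type*} [AddCommMonoid M] (f : V → M) :
    ∑ e ∈ G.edgeFinset, ∑ v ∈ e.toFinset, f v = ∑ v, G.degree v • f v := by
  rw [sum_comm' (t' := univ) (s' := fun v => G.incidenceFinset v) (h := fun e v => by
    simp [Sym2.mem_toFinset, incidenceSet])]
  simp [card_incidenceFinset_eq_degree]

end SimpleGraph

section EvDegree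

variable {V : Type*} [Fintype V] {G : SimpleGraph V}

theorem evDeg_mk (u v : V) :
    evDeg G s(u, v) = #(insert u (G.neighborFinset u) ∪ insert v (G.neighborFinset v)) :=
  rfl

theorem evDeg_le_card (e : Sym2 V) : evDeg G e ≤ Fintype.card V := by
  induction e with
  | h u v => exact card_le_univ _

theorem evDeg_mk_of_adj (hG : G.CliqueFree 3) {u v : V} (h : G.Adj u v) :
    evDeg G s(u, v) = G.degree u + G.degree v := by
  have hclosed : insert u (G.neighborFinset u) ∪ insert v (G.neighborFinset v) =
      G.neighborFinset u ∪ G.neighborFinset v := by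
    ext w
    simp only [mem_union, mem_insert, mem_neighborFinset]
    constructor
    · rintro ((rfl | h') | (rfl | h'))
      exacts [Or.inr h.symm, Or.inl h', Or.inl h, Or.inr h']
    · rintro (h' | h') <;> simp [h']
  rw [evDeg_mk, hclosed, card_union_of_disjoint, card_neighborFinset_eq_degree,
    card_neighborFinset_eq_degree]
  exact disjoint_left.mpr fun w hu hv =>
    hG.not_adj_of_adj_of_adj h ((mem_neighborFinset _ _ _).mp hu) ((mem_neighborFinset _ _ _).mp hv)

theorem sum_evDeg (hG : G.CliqueFree 3) :
    ∑ e ∈ G.edgeFinset, evDeg G e = ∑ v, G.degree v ^ 2 := by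
  simp_rw [sq, ← smul_eq_mul, ← sum_edgeFinset_sum_toFinset]
  refine sum_congr rfl fun e he => ?_
  induction e with
  | h u v =>
    have h := mem_edgeFinset.mp he
    rw [evDeg_mk_of_adj hG h, Sym2.toFinset_mk_eq, sum_pair h.ne]

theorem evZagreb_le : evZagreb G ≤ #G.edgeFinset * Fintype.card V ^ 2 := by
  rw [← smul_eq_mul, ← sum_const]
  exact sum_le_sum fun e _ => Nat.pow_le_pow_left (evDeg_le_card e) 2

theorem evZagreb_eq_iff :
    evZagreb G = #G.edgeFinset * Fintype.card V ^ 2 ↔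
      ∀ e ∈ G.edgeFinset, evDeg G e = Fintype.card V := by
  rw [← smul_eq_mul, ← sum_const, evZagreb,
    sum_eq_sum_iff_of_le fun e _ => Nat.pow_le_pow_left (evDeg_le_card e) 2]
  simp only [Nat.pow_left_injective two_ne_zero |>.eq_iff]

theorem isUniversal_of_evDeg_eq_card {l c : V} (hl : G.degree l = 1) (h : G.Adj l c)
    (he : evDeg G s(l, c) = Fintype.card V) : G.IsUniversal c := by
  obtain ⟨x, hx⟩ := card_eq_one.mp ((card_neighborFinset_eq_degree G l).trans hl)
  obtain rfl : c = x := by simpa [hx] using (mem_neighborFinset G l c).mpr h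
  have hsub : insert l (G.neighborFinset l) ⊆ insert c (G.neighborFinset c) := by
    simp [hx, insert_subset_iff, h.symm]
  rw [evDeg_mk, union_eq_right.mpr hsub, card_eq_iff_eq_univ] at he
  exact (G.insert_neighborFinset_eq_univ c).mp he

theorem evDeg_eq_card_of_isUniversal (hG : G.CliqueFree 3) {c : V} (hc : G.IsUniversal c)
    {e : Sym2 V} (he : e ∈ G.edgeSet) : evDeg G e = Fintype.card V := by
  induction e with
  | h u v =>
    have huniv := (G.insert_neighborFinset_eq_univ c).mpr hc
    have hstar := starGraph_adj.mp (hG.eq_starGraph_of_isUniversal hc ▸ he)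
    rw [evDeg_mk, card_eq_iff_eq_univ, ← univ_subset_iff]
    rcases hstar.2 with rfl | rfl
    exacts [huniv ▸ subset_union_left, huniv ▸ subset_union_right]

end EvDegree

namespace SimpleGraph

variable {V : Type*} [Fintype V] {G : SimpleGraph V}

theorem three_mul_sum_degree_le :
    3 * ∑ v, G.degree v ≤ ∑ v, G.degree v ^ 2 + Fintype.card V * 2 :=
  card_univ (α := V) ▸ two_mul_add_one_mul_sum_le univ (fun v => G.degree v) 1

theorem three_mul_sum_degree_eq_iff :
    3 * ∑ v, G.degree v = ∑ v, G.degree v ^ 2 + Fintype.card V * 2 ↔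
      ∀ v, G.degree v = 1 ∨ G.degree v = 2 := by
  simpa using two_mul_add_one_mul_sum_eq_iff univ (fun v => G.degree v) 1

theorem CliqueFree.seven_mul_sum_degree_sq_le (hG : G.CliqueFree 3) :
    7 * ∑ v, G.degree v ^ 2 ≤ evZagreb G + #G.edgeFinset * 12 :=
  sum_evDeg hG ▸ two_mul_add_one_mul_sum_le G.edgeFinset (evDeg G) 3

theorem CliqueFree.seven_mul_sum_degree_sq_eq_iff (hG : G.CliqueFree 3) :
    7 * ∑ v, G.degree v ^ 2 = evZagreb G + #G.edgeFinset * 12 ↔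
      ∀ e ∈ G.edgeFinset, evDeg G e = 3 ∨ evDeg G e = 4 :=
  sum_evDeg hG ▸ two_mul_add_one_mul_sum_eq_iff G.edgeFinset (evDeg G) 3

namespace IsTree

theorem sum_degree_add_two (hT : G.IsTree) : ∑ v, G.degree v + 2 = 2 * Fintype.card V := by
  rw [sum_degrees_eq_twice_card_edges, ← hT.card_edgeFinset]
  ring

theorem sixteen_mul_card_le_evZagreb_add (hT : G.IsTree) :
    16 * Fintype.card V ≤ evZagreb G + 30 := by
  have := hT.sum_degree_add_two
  have := hT.card_edgeFinset
  have := G.three_mul_sum_degree_le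
  have := (hT.isAcyclic.cliqueFree le_rfl).seven_mul_sum_degree_sq_le
  omega

theorem evZagreb_add_eq_iff (hT : G.IsTree) (h3 : 3 ≤ Fintype.card V) :
    evZagreb G + 30 = 16 * Fintype.card V ↔ ∀ v, G.degree v ≤ 2 := by
  have hG := hT.isAcyclic.cliqueFree le_rfl
  have := hT.sum_degree_add_two
  have := hT.card_edgeFinset
  have := G.three_mul_sum_degree_le
  have := hG.seven_mul_sum_degree_sq_le
  have hpos : ∀ v, 0 < G.degree v :=
    have : Nontrivial V := Fintype.one_lt_card_iff_nontrivial.mp (by omega)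
    fun v => hT.connected.preconnected.degree_pos_of_nontrivial v
  constructor
  · intro h v
    have := G.three_mul_sum_degree_eq_iff.mp (by omega) v
    omega
  · intro h
    have := G.three_mul_sum_degree_eq_iff.mpr fun v => by have := hpos v; have := h v; omega
    have hedge : ∀ u v, G.Adj u v → evDeg G s(u, v) = 3 ∨ evDeg G s(u, v) = 4 := by
      intro u v huv
      have hleaves : ¬(G.degree u = 1 ∧ G.degree v = 1) := fun ⟨hu, hv⟩ => by
        have := hT.connected.preconnected.card_le_two_of_adj_of_degree_eq_one huv hu hv
        omega
      rw [evDeg_mk_of_adj hG huv]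
      have := hpos u; have := hpos v; have := h u; have := h v
      omega
    have := hG.seven_mul_sum_degree_sq_eq_iff.mpr fun e he => by
      induction e with
      | h u v => exact hedge u v (mem_edgeFinset.mp he)
    omega

theorem forall_evDeg_eq_card_iff [Nontrivial V] (hT : G.IsTree) :
    (∀ e ∈ G.edgeFinset, evDeg G e = Fintype.card V) ↔ ∃ c, G.IsUniversal c := by
  constructor
  · intro h
    obtain ⟨l, hl⟩ := hT.exists_vert_degree_one_of_nontrivial
    obtain ⟨c, hc⟩ := G.degree_pos_iff_exists_adj l |>.mp (by omega)
    exact ⟨c, isUniversal_of_evDeg_eq_card hl hc (h _ (mem_edgeFinset.mpr hc))⟩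
  · rintro ⟨c, hc⟩ e he
    exact evDeg_eq_card_of_isUniversal (hT.isAcyclic.cliqueFree le_rfl) hc (mem_edgeFinset.mp he)

end IsTree

end SimpleGraph

theorem evZagreb_tree_bounds {V : Type*} [Fintype V] (G : SimpleGraph V) (n : ℕ)
    (hn : 3 ≤ n) (hcard : Fintype.card V = n) (hT : G.IsTree) :
    16 * n - 30 ≤ evZagreb G ∧ evZagreb G ≤ n ^ 2 * (n - 1) ∧
      (evZagreb G = 16 * n - 30 ↔ Nonempty (G ≃g SimpleGraph.pathGraph n)) ∧
      (evZagreb G = n ^ 2 * (n - 1) ↔ Nonempty (G ≃g _root_.starGraph n)) := by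
  subst hcard
  have : Nontrivial V := Fintype.one_lt_card_iff_nontrivial.mp (by omega)
  have hE : #G.edgeFinset * Fintype.card V ^ 2 = Fintype.card V ^ 2 * (Fintype.card V - 1) := by
    rw [← hT.card_edgeFinset, Nat.add_sub_cancel, mul_comm]
  have hlow := hT.sixteen_mul_card_le_evZagreb_add
  refine ⟨by omega, hE ▸ evZagreb_le, ?_, ?_⟩
  · rw [hT.nonempty_iso_pathGraph_iff, ← hT.evZagreb_add_eq_iff hn]
    omega
  · rw [← hE, evZagreb_eq_iff, hT.forall_evDeg_eq_card_iff,
      (hT.isAcyclic.cliqueFree le_rfl).nonempty_iso_starGraph_iff]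
end

section
/- Let T be a tree on n ≥ 5 vertices. Then S^α(T) ≤ n(n−1)², with equality if and only if T is a star, where S^α(T) = Σ_{v∈V(T)} c_v² is the first ve-degree Zagreb alpha index. -/
open scoped Classical
open Finset SimpleGraph

/-!
Each `c_v` counts a subset of the `n - 1` edges, so every term of `S^α(T)` is at most `(n - 1)²`.
Equality forces the closed neighbourhood of every vertex, in particular of a leaf `v` with
neighbour `c`, to meet every edge; hence every edge contains `c`, so `T` lies inside the star
centred at `c`, and being a maximal acyclic graph it is that star.
-/

section VeDegree

variable {V : Type*} [Fintype V] (G : SimpleGraph V)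

theorem veDeg_le_card_edgeFinset (v : V) : veDeg G v ≤ #G.edgeFinset :=
  card_filter_le _ _

theorem veDeg_eq_card_edgeFinset_iff {v : V} :
    veDeg G v = #G.edgeFinset ↔
      ∀ a b, G.Adj a b → (a = v ∨ G.Adj v a) ∨ (b = v ∨ G.Adj v b) := by
  rw [veDeg, card_filter_eq_iff]
  simp only [Sym2.forall, mem_edgeFinset, mem_edgeSet, Sym2.mem_iff, and_or_left, exists_or,
    exists_eq_right, mem_insert, mem_neighborFinset]

theorem veAlpha_le_card_mul_sq : veAlpha G ≤ Fintype.card V * #G.edgeFinset ^ 2 := by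
  simpa [veAlpha] using
    sum_le_sum fun v (_ : v ∈ univ) => Nat.pow_le_pow_left (veDeg_le_card_edgeFinset G v) 2

theorem veAlpha_eq_card_mul_sq_iff :
    veAlpha G = Fintype.card V * #G.edgeFinset ^ 2 ↔ ∀ v, veDeg G v = #G.edgeFinset := by
  have h := sum_eq_sum_iff_of_le fun v (_ : v ∈ univ) =>
    Nat.pow_le_pow_left (veDeg_le_card_edgeFinset G v) 2
  simpa [veAlpha, Nat.pow_left_injective two_ne_zero |>.eq_iff] using h

end VeDegree

namespace SimpleGraph

variable {V W : Type*}

theorem IsTree.eq_of_le_of_isAcyclic {G H : SimpleGraph V} (hG : G.IsTree) (hH : H.IsAcyclic)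
    (hGH : G ≤ H) : G = H :=
  (isTree_iff_maximal_isAcyclic.1 hG).2.eq_of_le hH hGH

theorem IsTree.exists_eq_starGraph_of_forall_veDeg_eq [Fintype V] {G : SimpleGraph V}
    (hG : G.IsTree) (h : ∀ v, veDeg G v = #G.edgeFinset) : ∃ c, G = starGraph c := by
  suffices ∃ c, ∀ a b, G.Adj a b → a = c ∨ b = c by
    obtain ⟨c, hc⟩ := this
    exact ⟨c, hG.eq_of_le_of_isAcyclic (isAcyclic_starGraph c)
      fun a b hab => starGraph_adj.2 ⟨hab.ne, hc a b hab⟩⟩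
  cases subsingleton_or_nontrivial V
  · obtain ⟨c⟩ := hG.connected.nonempty
    exact ⟨c, fun a b hab => (hab.ne (Subsingleton.elim a b)).elim⟩
  obtain ⟨v, hv⟩ := hG.exists_vert_degree_one_of_nontrivial
  obtain ⟨c, -, hc⟩ := degree_eq_one_iff_existsUnique_adj.1 hv
  -- an endpoint of each edge lies in `N[v] = {v, c}`, and the only edge at `v` is `vc`
  refine ⟨c, fun a b hab => ?_⟩
  rcases (veDeg_eq_card_edgeFinset_iff G).1 (h v) a b hab with (rfl | ha) | (rfl | hb)
  exacts [Or.inr (hc b hab), Or.inl (hc a ha), Or.inl (hc a hab.symm), Or.inr (hc b hb)]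

theorem IsTree.forall_veDeg_eq_iff [Fintype V] {G : SimpleGraph V} (hG : G.IsTree) :
    (∀ v, veDeg G v = #G.edgeFinset) ↔ ∃ c, G = starGraph c := by
  refine ⟨hG.exists_eq_starGraph_of_forall_veDeg_eq, ?_⟩
  rintro ⟨c, rfl⟩ v
  have hc : c = v ∨ (starGraph c).Adj v c := (eq_or_ne c v).imp_right starGraph_center_adj'
  refine (veDeg_eq_card_edgeFinset_iff _).2 fun a b hab => ?_
  rcases (starGraph_adj.1 hab).2 with rfl | rfl
  exacts [Or.inl hc, Or.inr hc]

def starGraphCongr (e : V ≃ W) (r : V) : starGraph r ≃g starGraph (e r) :=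
  { e with map_rel_iff' := by simp [e.apply_eq_iff_eq] }

theorem Iso.eq_starGraph {G : SimpleGraph V} {s : W} (f : G ≃g starGraph s) :
    G = starGraph (f.symm s) := by
  ext a b
  rw [← f.map_rel_iff]
  simp [RelIso.eq_symm_apply]

end SimpleGraph

theorem starGraph_eq_starGraph_zero (n : ℕ) [NeZero n] :
    _root_.starGraph n = SimpleGraph.starGraph 0 := by
  ext a b
  simp only [_root_.starGraph, SimpleGraph.starGraph_adj, Fin.ext_iff, Fin.val_zero]

theorem nonempty_iso_starGraph_iff {V : Type*} [Fintype V] {G : SimpleGraph V} {n : ℕ} [NeZero n]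
    (hcard : Fintype.card V = n) :
    Nonempty (G ≃g _root_.starGraph n) ↔ ∃ c, G = SimpleGraph.starGraph c := by
  rw [starGraph_eq_starGraph_zero]
  refine ⟨fun ⟨f⟩ => ⟨_, f.eq_starGraph⟩, ?_⟩
  rintro ⟨c, rfl⟩
  let e₀ := Fintype.equivFinOfCardEq hcard
  let e := e₀.trans (Equiv.swap (e₀ c) 0)
  have hc : e c = 0 := by simp [e]
  exact ⟨hc ▸ starGraphCongr e c⟩

theorem veAlpha_tree_upper_bound_general {V : Type*} [Fintype V] (G : SimpleGraph V) (n : ℕ)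
    (hcard : Fintype.card V = n) (hT : G.IsTree) :
    veAlpha G ≤ n * (n - 1) ^ 2 ∧
      (veAlpha G = n * (n - 1) ^ 2 ↔ Nonempty (G ≃g _root_.starGraph n)) := by
  subst hcard
  have hcardE := hT.card_edgeFinset
  have hedges : #G.edgeFinset = Fintype.card V - 1 := by omega
  have : NeZero (Fintype.card V) := ⟨by omega⟩
  rw [← hedges, veAlpha_eq_card_mul_sq_iff, hT.forall_veDeg_eq_iff,
    nonempty_iso_starGraph_iff rfl]
  exact ⟨veAlpha_le_card_mul_sq G, Iff.rfl⟩

theorem veAlpha_tree_upper_bound {V : Type*} [Fintype V] (G : SimpleGraph V) (n : ℕ)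
    (hn : 5 ≤ n) (hcard : Fintype.card V = n) (hT : G.IsTree) :
    veAlpha G ≤ n * (n - 1) ^ 2 ∧
      (veAlpha G = n * (n - 1) ^ 2 ↔ Nonempty (G ≃g _root_.starGraph n)) :=
  veAlpha_tree_upper_bound_general G n hcard hT
end
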